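/- In the polynomial ring A = ℂ[x₁₁, x₁₂, x₁₃, x₂₁, x₂₂, x₂₃, x₃₁, x₃₂, x₃₃] in nine variables, both of the following ideals are prime: p₁ = ⟨x₁₁, x₁₂, x₂₂, x₃₁, x₃₂, x₃₃⟩ and p₂ = ⟨x₃₁, x₃₂, x₃₃, x₁₁ + x₂₂, x₁₂x₂₁ + x₂₂², x₁₂x₂₃ − x₁₃x₂₂, x₁₃x₂₁ + x₂₂x₂₃⟩. -/

import Mathlib

/-!
`p₁` is generated by variables, so `A ⧸ p₁` is a polynomial ring. Modulo `x₃ⱼ` and `x₁₁ + x₂₂`,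
`p₂` becomes the ideal `J` of `2 × 2` minors of `[[-x₂₂, x₁₂, x₁₃], [x₂₁, x₂₂, x₂₃]]`. Writing a
rank-one such matrix as `(u, v)ᵀ (v w, -u w, z)` gives the monomial map
`(x₁₂, x₁₃, x₂₁, x₂₂, x₂₃) ↦ (-u²w, uz, v²w, -uvw, vz)`, which kills `J`; its kernel is prime, and
it is exactly `J`: the three binomials generating `J` rewrite every monomial modulo `J` into a
combination of standard monomials (those not divisible by `x₁₂x₂₁`, `x₁₂x₂₃`, `x₁₃x₂₁`), each
step lowering `2 deg_{x₁₂} + deg_{x₁₃}`, and the monomial map sends distinct standard monomials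
to distinct monomials.
-/

open MvPolynomial

theorem Ideal.eq_comap_of_retraction {A B F G : Type*} [CommRing A] [CommRing B]
    [FunLike F A B] [RingHomClass F A B] [FunLike G B A] [RingHomClass G B A]
    {I : Ideal A} {J : Ideal B} (π : F) (ρ : G) (hπ : I.map π ≤ J) (hρ : J.map ρ ≤ I)
    (hρπ : ∀ a, a - ρ (π a) ∈ I) : I = J.comap π := by
  refine le_antisymm (Ideal.map_le_iff_le_comap.mp hπ) fun a ha => ?_
  simpa using add_mem (hρπ a) (hρ (Ideal.mem_map_of_mem ρ ha))

namespace MvPolynomial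

variable {σ τ R : Type*} [CommRing R]

theorem sub_mem_of_forall_X_sub_mem {I : Ideal (MvPolynomial σ R)}
    (φ : MvPolynomial σ R →ₐ[R] MvPolynomial σ R) (h : ∀ i, X i - φ (X i) ∈ I)
    (p : MvPolynomial σ R) : p - φ p ∈ I := by
  have hφ : (Ideal.Quotient.mkₐ R I).comp φ = Ideal.Quotient.mkₐ R I := by
    ext i
    simpa [Ideal.Quotient.mkₐ_eq_mk, Ideal.Quotient.eq, eq_comm] using h i
  rw [← Ideal.Quotient.eq]
  exact (AlgHom.congr_fun hφ p).symm

theorem isPrime_span_X_image [IsDomain R] (s : Set σ) :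
    (Ideal.span (X '' s : Set (MvPolynomial σ R))).IsPrime := by
  classical
  let π : MvPolynomial σ R →ₐ[R] MvPolynomial σ R := aeval fun i => if i ∈ s then 0 else X i
  have hker : Ideal.span (X '' s) = (⊥ : Ideal (MvPolynomial σ R)).comap π := by
    refine Ideal.eq_comap_of_retraction π (RingHom.id _) ?_ (by simp) ?_
    · rw [Ideal.map_span, Ideal.span_le]
      rintro _ ⟨_, ⟨i, hi, rfl⟩, rfl⟩
      simp [π, hi]
    · refine sub_mem_of_forall_X_sub_mem π fun i => ?_
      by_cases hi : i ∈ s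
      · simpa [π, hi] using Ideal.subset_span (Set.mem_image_of_mem X hi)
      · simp [π, hi]
  rw [hker]
  exact Ideal.comap_isPrime π ⊥

theorem aeval_monomial_monomial (e : σ → τ →₀ ℕ) (c : σ → R) (s : σ →₀ ℕ) (r : R) :
    aeval (fun i => monomial (e i) (c i)) (monomial s r) =
      monomial (s.sum fun i k => k • e i) (r * s.prod fun i k => c i ^ k) := by
  simp only [aeval_monomial, Finsupp.sum, Finsupp.prod, monomial_pow, ← monomial_sum_prod,
    algebraMap_eq, C_mul_monomial]

theorem eq_zero_of_aeval_monomial_eq_zero [IsDomain R] {e : σ → τ →₀ ℕ} {c : σ → R}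
    (hc : ∀ i, c i ≠ 0) {S : Set (σ →₀ ℕ)} (hS : S.InjOn fun s => s.sum fun i k => k • e i)
    {p : MvPolynomial σ R} (hp : p ∈ restrictSupport R S)
    (h : aeval (fun i => monomial (e i) (c i)) p = 0) : p = 0 := by
  classical
  rw [mem_restrictSupport_iff] at hp
  ext s
  rw [coeff_zero]
  by_contra hs
  have hcoeff : coeff (s.sum fun i k => k • e i) (aeval (fun i => monomial (e i) (c i)) p) =
      coeff s p * s.prod fun i k => c i ^ k := by
    conv_lhs => rw [p.as_sum]
    rw [map_sum, coeff_sum, Finset.sum_eq_single s]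
    · rw [aeval_monomial_monomial, coeff_monomial, if_pos rfl]
    · intro s' hs' hne
      rw [aeval_monomial_monomial, coeff_monomial, if_neg]
      exact fun h => hne (hS (hp hs') (hp (mem_support_iff.mpr hs)) h)
    · exact fun h => absurd (mem_support_iff.mpr hs) h
  have hprod : (s.prod fun i k => c i ^ k) ≠ 0 :=
    Finset.prod_ne_zero_iff.mpr fun i _ => pow_ne_zero _ (hc i)
  rw [h, coeff_zero] at hcoeff
  exact mul_ne_zero hs hprod hcoeff.symm

theorem exists_sub_mem_restrictSupport_of_binomials {ι : Type*} (J : Ideal (MvPolynomial σ R))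
    (w : σ → ℕ) (a b : ι → σ →₀ ℕ) (c : ι → R)
    (hJ : ∀ k, monomial (a k) 1 - c k • monomial (b k) 1 ∈ J)
    (hw : ∀ k, Finsupp.weight w (b k) < Finsupp.weight w (a k)) (p : MvPolynomial σ R) :
    ∃ q ∈ restrictSupport R {s | ∀ k, ¬ a k ≤ s}, p - q ∈ J := by
  suffices hmono : ∀ s, ∃ q ∈ restrictSupport R {s | ∀ k, ¬ a k ≤ s}, monomial s 1 - q ∈ J by
    induction p using MvPolynomial.induction_on' with
    | monomial s r =>
      obtain ⟨q, hq, hsq⟩ := hmono s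
      refine ⟨r • q, Submodule.smul_mem _ r hq, ?_⟩
      rw [show monomial s r = r • monomial s 1 by simp [smul_monomial], ← smul_sub]
      exact Submodule.smul_of_tower_mem J r hsq
    | add p p' hp hp' =>
      obtain ⟨q, hq, hpq⟩ := hp
      obtain ⟨q', hq', hpq'⟩ := hp'
      exact ⟨q + q', add_mem hq hq', by simpa [add_sub_add_comm] using add_mem hpq hpq'⟩
  intro s
  induction hn : Finsupp.weight w s using Nat.strong_induction_on generalizing s with
  | _ n ih =>
  by_cases hs : ∀ k, ¬ a k ≤ s
  · exact ⟨monomial s 1, by simp [hs], by simp⟩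
  push Not at hs
  obtain ⟨k, hk⟩ := hs
  have hsplit : s - a k + a k = s := tsub_add_cancel_of_le hk
  have hlt : Finsupp.weight w (s - a k + b k) < n := by
    rw [← hn, ← hsplit, map_add, map_add, hsplit]
    exact Nat.add_lt_add_left (hw k) _
  obtain ⟨q, hq, hsq⟩ := ih _ hlt _ rfl
  have hstep : monomial s 1 - c k • monomial (s - a k + b k) 1 ∈ J := by
    convert J.mul_mem_left (monomial (s - a k) 1) (hJ k) using 1
    rw [mul_sub, mul_smul_comm, monomial_mul, monomial_mul, hsplit, mul_one]
  refine ⟨c k • q, Submodule.smul_mem _ _ hq, ?_⟩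
  convert add_mem hstep (Submodule.smul_of_tower_mem J (c k) hsq) using 1
  rw [smul_sub]
  abel

end MvPolynomial

noncomputable section

namespace TracelessRankOne

open Finsupp (single)

variable (R : Type*) [CommRing R]

def minorsIdeal : Ideal (MvPolynomial (Fin 5) R) :=
  Ideal.span {X 0 * X 2 + X 3 ^ 2, X 0 * X 4 - X 1 * X 3, X 1 * X 2 + X 3 * X 4}

def paramExponent : Fin 5 → Fin 4 →₀ ℕ :=
  ![single 0 2 + single 2 1, single 0 1 + single 3 1, single 1 2 + single 2 1,
    single 0 1 + single 1 1 + single 2 1, single 1 1 + single 3 1]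

def paramSign : Fin 5 → R := ![-1, 1, 1, -1, 1]

def param : MvPolynomial (Fin 5) R →ₐ[R] MvPolynomial (Fin 4) R :=
  aeval fun i => monomial (paramExponent i) (paramSign R i)

lemma param_X (i : Fin 5) :
    param R (X i) =
      ![-(X 0 ^ 2 * X 2), X 0 * X 3, X 1 ^ 2 * X 2, -(X 0 * X 1 * X 2), X 1 * X 3] i := by
  fin_cases i <;>
    simp [param, paramExponent, paramSign, monomial_single_add, ← X_pow_eq_monomial, add_assoc,
      mul_assoc]

lemma minorsIdeal_le_ker_param : minorsIdeal R ≤ RingHom.ker (param R) := by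
  rw [minorsIdeal, Ideal.span_le]
  rintro _ (rfl | rfl | rfl) <;> simp [param_X] <;> ring

def leadExponent : Fin 3 → Fin 5 →₀ ℕ :=
  ![single 0 1 + single 2 1, single 0 1 + single 4 1, single 1 1 + single 2 1]

def tailExponent : Fin 3 → Fin 5 →₀ ℕ :=
  ![single 3 2, single 1 1 + single 3 1, single 3 1 + single 4 1]

def tailCoeff : Fin 3 → R := ![-1, 1, -1]

def reductionWeight : Fin 5 → ℕ := ![2, 1, 0, 0, 0]

lemma binomial_mem_minorsIdeal (k : Fin 3) :
    monomial (leadExponent k) 1 - tailCoeff R k • monomial (tailExponent k) 1 ∈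
      minorsIdeal R := by
  apply Ideal.subset_span
  fin_cases k <;>
    simp [leadExponent, tailExponent, tailCoeff, monomial_single_add, ← X_pow_eq_monomial]

lemma weight_tailExponent_lt (k : Fin 3) :
    Finsupp.weight reductionWeight (tailExponent k) <
      Finsupp.weight reductionWeight (leadExponent k) := by
  fin_cases k <;> simp [reductionWeight, leadExponent, tailExponent, Finsupp.weight_single]

def standardExponents : Set (Fin 5 →₀ ℕ) := {s | ∀ k, ¬ leadExponent k ≤ s}

lemma mem_standardExponents {s : Fin 5 →₀ ℕ} :
    s ∈ standardExponents ↔ (s 0 = 0 ∨ s 2 = 0) ∧ (s 0 = 0 ∨ s 4 = 0) ∧ (s 1 = 0 ∨ s 2 = 0) := by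
  simp [standardExponents, Fin.forall_fin_succ, leadExponent, Finsupp.le_def, imp_iff_not_or]

lemma coe_sum_smul_paramExponent (s : Fin 5 →₀ ℕ) :
    ⇑(s.sum fun i k => k • paramExponent i) =
      ![2 * s 0 + s 1 + s 3, 2 * s 2 + s 3 + s 4, s 0 + s 2 + s 3, s 1 + s 4] := by
  ext j
  fin_cases j <;> simp [Finsupp.sum_fintype, Fin.sum_univ_five, paramExponent] <;> ring

lemma injOn_standardExponents :
    standardExponents.InjOn fun s : Fin 5 →₀ ℕ => s.sum fun i k => k • paramExponent i := by
  intro s hs t ht hst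
  have hcoord := congrArg DFunLike.coe hst
  simp only [coe_sum_smul_paramExponent, Matrix.vecCons_inj] at hcoord
  rw [mem_standardExponents] at hs ht
  ext i
  fin_cases i <;> dsimp <;> omega

lemma minorsIdeal_eq_ker_param [IsDomain R] : minorsIdeal R = RingHom.ker (param R) := by
  refine le_antisymm (minorsIdeal_le_ker_param R) fun p hp => ?_
  obtain ⟨q, hq, hpq⟩ := exists_sub_mem_restrictSupport_of_binomials (minorsIdeal R)
    reductionWeight leadExponent tailExponent (tailCoeff R) (binomial_mem_minorsIdeal R)
    weight_tailExponent_lt p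
  have hparam : param R q = 0 := by
    have hpq' := minorsIdeal_le_ker_param R hpq
    rw [RingHom.mem_ker] at hp hpq'
    rwa [map_sub, hp, zero_sub, neg_eq_zero] at hpq'
  have hsign (i : Fin 5) : paramSign R i ≠ 0 := by fin_cases i <;> simp [paramSign]
  simpa [eq_zero_of_aeval_monomial_eq_zero hsign injOn_standardExponents hq hparam] using hpq

lemma minorsIdeal_isPrime [IsDomain R] : (minorsIdeal R).IsPrime := by
  rw [minorsIdeal_eq_ker_param]
  exact RingHom.ker_isPrime _

def collapse : MvPolynomial (Fin 3 × Fin 3) R →ₐ[R] MvPolynomial (Fin 5) R :=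
  aeval fun p => ![![-X 3, X 0, X 1], ![X 2, X 3, X 4], ![0, 0, 0]] p.1 p.2

def embed : MvPolynomial (Fin 5) R →ₐ[R] MvPolynomial (Fin 3 × Fin 3) R :=
  aeval ![X (0, 1), X (0, 2), X (1, 0), X (1, 1), X (1, 2)]

def tracelessRankOneIdeal : Ideal (MvPolynomial (Fin 3 × Fin 3) R) :=
  Ideal.span {X (2, 0), X (2, 1), X (2, 2), X (0, 0) + X (1, 1),
    X (0, 1) * X (1, 0) + X (1, 1) ^ 2, X (0, 1) * X (1, 2) - X (0, 2) * X (1, 1),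
    X (0, 2) * X (1, 0) + X (1, 1) * X (1, 2)}

lemma tracelessRankOneIdeal_eq_comap :
    tracelessRankOneIdeal R = (minorsIdeal R).comap (collapse R) := by
  refine Ideal.eq_comap_of_retraction (collapse R) (embed R) ?_ ?_ ?_
  · rw [tracelessRankOneIdeal, Ideal.map_span, Ideal.span_le]
    rintro _ ⟨g, hg, rfl⟩
    rcases hg with rfl | rfl | rfl | rfl | rfl | rfl | rfl <;> simp [collapse] <;>
      apply Ideal.subset_span <;> simp
  · rw [minorsIdeal, Ideal.map_span, Ideal.span_le]
    rintro _ ⟨g, hg, rfl⟩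
    rcases hg with rfl | rfl | rfl <;> apply Ideal.subset_span <;> simp [embed]
  · refine sub_mem_of_forall_X_sub_mem ((embed R).comp (collapse R)) fun ⟨i, j⟩ => ?_
    fin_cases i <;> fin_cases j <;> simp [collapse, embed] <;> apply Ideal.subset_span <;> simp

lemma tracelessRankOneIdeal_isPrime [IsDomain R] : (tracelessRankOneIdeal R).IsPrime := by
  rw [tracelessRankOneIdeal_eq_comap]
  exact (minorsIdeal_isPrime R).comap _

end TracelessRankOne

end

theorem prime_ideals_p1_p2 :
    (Ideal.span {(X (0, 0) : MvPolynomial (Fin 3 × Fin 3) ℂ), X (0, 1), X (1, 1),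
        X (2, 0), X (2, 1), X (2, 2)}).IsPrime ∧
    (Ideal.span {(X (2, 0) : MvPolynomial (Fin 3 × Fin 3) ℂ), X (2, 1), X (2, 2),
        X (0, 0) + X (1, 1),
        X (0, 1) * X (1, 0) + X (1, 1) ^ 2,
        X (0, 1) * X (1, 2) - X (0, 2) * X (1, 1),
        X (0, 2) * X (1, 0) + X (1, 1) * X (1, 2)}).IsPrime := by
  refine ⟨?_, TracelessRankOne.tracelessRankOneIdeal_isPrime ℂ⟩
  simpa [Set.image_insert_eq] using
    isPrime_span_X_image (R := ℂ) {(0, 0), (0, 1), (1, 1), (2, 0), (2, 1), (2, 2)}
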